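/- The kernel K_θ satisfies the cyclic-invariance identity K_θ(g^{-1}, g^{-1}h) = K_θ(h, g) for all g, h ∈ G. -/
import Mathlib

open Real
noncomputable section

abbrev G (d : ℕ) := ℝ × ((Fin d → ℝ) × (Fin d → ℝ)) × ℝ

/-- The standard symplectic form on ℝ^{2d}, with v = (n, m). -/
def omega0 {d : ℕ} (v w : (Fin d → ℝ) × (Fin d → ℝ)) : ℝ :=
  ∑ i, (v.1 i * w.2 i - v.2 i * w.1 i)

/-- The group law (a,v,t)(a',v',t') = (a+a', e^{-a'}v+v', e^{-2a'}t+t'+(1/2)e^{-a'}ω₀(v,v')). -/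
def gmul {d : ℕ} (g h : G d) : G d :=
  (g.1 + h.1, Real.exp (-h.1) • g.2.1 + h.2.1,
    Real.exp (-(2 * h.1)) * g.2.2 + h.2.2 + (1/2) * Real.exp (-h.1) * omega0 g.2.1 h.2.1)

/-- The identity element (0,0,0). -/
def gone {d : ℕ} : G d := (0, 0, 0)

/-- The inverse (a,v,t)^{-1} = (-a, -e^a v, -e^{2a} t). -/
def ginv {d : ℕ} (g : G d) : G d :=
  (-g.1, -(Real.exp g.1 • g.2.1), -(Real.exp (2 * g.1) * g.2.2))

/-- The symmetry s_g at the point g. -/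
def ssym {d : ℕ} (g g' : G d) : G d :=
  (2 * g.1 - g'.1, (2 * Real.cosh (g.1 - g'.1)) • g.2.1 - g'.2.1,
    2 * g.2.2 * Real.cosh (2 * g.1 - 2 * g'.1) - g'.2.2
      + omega0 g.2.1 g'.2.1 * Real.sinh (g.1 - g'.1))

/-- The two-point phase S(g₁,g₂). -/
def Sph {d : ℕ} (g₁ g₂ : G d) : ℝ :=
  Real.sinh (2 * g₁.1) * g₂.2.2 - Real.sinh (2 * g₂.1) * g₁.2.2
    + Real.cosh g₁.1 * Real.cosh g₂.1 * omega0 g₁.2.1 g₂.2.1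

/-- The two-point amplitude A(g₁,g₂). -/
def Aamp {d : ℕ} (g₁ g₂ : G d) : ℝ :=
  (Real.cosh g₁.1 * Real.cosh g₂.1 * Real.cosh (g₁.1 - g₂.1)) ^ d *
    Real.sqrt (Real.cosh (2 * g₁.1) * Real.cosh (2 * g₂.1) * Real.cosh (2 * g₁.1 - 2 * g₂.1))

/-- The two-point kernel K_θ(g₁,g₂) = (4/(πθ)^{2d+2}) A(g₁,g₂) exp((2i/θ) S(g₁,g₂)). -/
def Kker {d : ℕ} (θ : ℝ) (g₁ g₂ : G d) : ℂ :=
  (4 / (Real.pi * θ) ^ (2 * d + 2) : ℝ) * (Aamp g₁ g₂ : ℝ) *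
    Complex.exp ((2 * Complex.I / (θ : ℂ)) * (Sph g₁ g₂ : ℝ))

lemma omega0_add_left {d : ℕ} (v w u : (Fin d → ℝ) × (Fin d → ℝ)) :
    omega0 (v + w) u = omega0 v u + omega0 w u := by
  simp only [omega0, ← Finset.sum_add_distrib]
  exact Finset.sum_congr rfl fun i _ => by simp [Prod.fst_add, Prod.snd_add]; ring

lemma omega0_smul_left {d : ℕ} (c : ℝ) (v u : (Fin d → ℝ) × (Fin d → ℝ)) :
    omega0 (c • v) u = c * omega0 v u := by
  simp only [omega0, Finset.mul_sum]
  exact Finset.sum_congr rfl fun i _ => by simp [Prod.smul_fst, Prod.smul_snd]; ring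

lemma omega0_neg_left {d : ℕ} (v u : (Fin d → ℝ) × (Fin d → ℝ)) :
    omega0 (-v) u = - omega0 v u := by
  simp only [omega0, ← Finset.sum_neg_distrib]
  exact Finset.sum_congr rfl fun i _ => by simp; ring

lemma omega0_add_right {d : ℕ} (v w u : (Fin d → ℝ) × (Fin d → ℝ)) :
    omega0 u (v + w) = omega0 u v + omega0 u w := by
  simp only [omega0, ← Finset.sum_add_distrib]
  exact Finset.sum_congr rfl fun i _ => by simp [Prod.fst_add, Prod.snd_add]; ring

lemma omega0_smul_right {d : ℕ} (c : ℝ) (v u : (Fin d → ℝ) × (Fin d → ℝ)) :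
    omega0 u (c • v) = c * omega0 u v := by
  simp only [omega0, Finset.mul_sum]
  exact Finset.sum_congr rfl fun i _ => by simp [Prod.smul_fst, Prod.smul_snd]; ring

lemma omega0_neg_right {d : ℕ} (v u : (Fin d → ℝ) × (Fin d → ℝ)) :
    omega0 u (-v) = - omega0 u v := by
  simp only [omega0, ← Finset.sum_neg_distrib]
  exact Finset.sum_congr rfl fun i _ => by simp; ring

lemma omega0_self {d : ℕ} (v : (Fin d → ℝ) × (Fin d → ℝ)) : omega0 v v = 0 := by
  simp [omega0, mul_comm]

lemma omega0_comm {d : ℕ} (v w : (Fin d → ℝ) × (Fin d → ℝ)) :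
    omega0 v w = - omega0 w v := by
  simp only [omega0, ← Finset.sum_neg_distrib]
  exact Finset.sum_congr rfl fun i _ => by ring

lemma Sph_eq {d : ℕ} (g h : G d) : Sph (ginv g) (gmul (ginv g) h) = Sph h g := by
  obtain ⟨a, v, t⟩ := g
  obtain ⟨a', v', t'⟩ := h
  simp only [Sph, gmul, ginv, omega0_add_right, omega0_smul_right, omega0_neg_right,
    omega0_neg_left, omega0_smul_left, omega0_self, omega0_comm v' v]
  simp only [Real.sinh_eq, Real.cosh_eq, two_mul, Real.exp_add, Real.exp_neg, Real.exp_sub,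
    neg_add, neg_neg]
  have h1 := Real.exp_ne_zero a
  have h2 := Real.exp_ne_zero a'
  field_simp
  ring

lemma Aamp_eq {d : ℕ} (g h : G d) : Aamp (ginv g) (gmul (ginv g) h) = Aamp h g := by
  obtain ⟨a, v, t⟩ := g
  obtain ⟨a', v', t'⟩ := h
  simp only [Aamp, gmul, ginv]
  have c1 : Real.cosh (-a + a') = Real.cosh (a' - a) := by rw [show -a+a' = a'-a by ring]
  have c2 : Real.cosh (2*(-a + a')) = Real.cosh (2*a' - 2*a) := by
    rw [show 2*(-a+a') = 2*a'-2*a by ring]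
  have c3 : Real.cosh (2*(-a) - 2*(-a + a')) = Real.cosh (2*a') := by
    rw [show 2*(-a)-2*(-a+a') = -(2*a') by ring, Real.cosh_neg]
  have c4 : Real.cosh (-a - (-a + a')) = Real.cosh a' := by
    rw [show -a-(-a+a') = -a' by ring, Real.cosh_neg]
  have c5 : Real.cosh (2*(-a)) = Real.cosh (2*a) := by
    rw [show 2*(-a) = -(2*a) by ring, Real.cosh_neg]
  rw [Real.cosh_neg, c1, c2, c3, c4, c5]
  ring_nf

theorem Kker_cyclic (d : ℕ) (θ : ℝ) (hθ : θ ≠ 0) (g h : G d) :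
    Kker θ (ginv g) (gmul (ginv g) h) = Kker θ h g := by
  simp only [Kker, Sph_eq, Aamp_eq]
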